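/- Let ρ_A and ρ_B be density matrices on ℂ^n with ρ_A ρ_B = ρ_B ρ_A. Then the compatibility equals the fidelity: C(ρ_A, ρ_B) = F(ρ_A, ρ_B). -/

import Mathlib

open Matrix BigOperators
open scoped ComplexOrder

/-- A density matrix: positive semidefinite with trace 1. -/
def IsDensityMatrix {d : Type*} [Fintype d] [DecidableEq d]
    (ρ : Matrix d d ℂ) : Prop :=
  ρ.PosSemidef ∧ ρ.trace = 1

/-- The compatibility `C(ρA, ρB)`: the supremum, over all finite families of density
matrices `σ` and weight vectors `p`, `q` (nonnegative, summing to 1) with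
`∑ i, p i • σ i = ρA` and `∑ i, q i • σ i = ρB`, of the Bhattacharyya overlap
`∑ i, √(p i * q i)`. -/
noncomputable def compat {d : Type*} [Fintype d] [DecidableEq d]
    (ρA ρB : Matrix d d ℂ) : ℝ :=
  sSup { c : ℝ | ∃ (m : ℕ) (σ : Fin m → Matrix d d ℂ) (p q : Fin m → ℝ),
    (∀ i, IsDensityMatrix (σ i)) ∧ (∀ i, 0 ≤ p i) ∧ (∀ i, 0 ≤ q i) ∧
    ∑ i, p i = 1 ∧ ∑ i, q i = 1 ∧
    ∑ i, p i • σ i = ρA ∧ ∑ i, q i • σ i = ρB ∧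
    c = ∑ i, Real.sqrt (p i * q i) }

open scoped Classical in
/-- The positive semidefinite square root of a positive semidefinite matrix
(junk value `0` on non-PSD matrices). -/
noncomputable def psdSqrt {d : Type*} [Fintype d] [DecidableEq d]
    (A : Matrix d d ℂ) : Matrix d d ℂ :=
  if h : A.PosSemidef then
    h.1.eigenvectorUnitary.1 * diagonal ((↑) ∘ (Real.sqrt ·) ∘ h.1.eigenvalues) *
      (star h.1.eigenvectorUnitary : Matrix d d ℂ) else 0

/-- The fidelity `F(ρA, ρB) = Tr √(√ρA ρB √ρA)`. -/
noncomputable def fidelity {d : Type*} [Fintype d] [DecidableEq d]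
    (ρA ρB : Matrix d d ℂ) : ℝ :=
  (psdSqrt (psdSqrt ρA * ρB * psdSqrt ρA)).trace.re

/-- The pure-state density matrix `|ψ⟩⟨ψ|` associated to a vector `ψ`. -/
def pureState {d : Type*} [Fintype d] [DecidableEq d] (ψ : d → ℂ) : Matrix d d ℂ :=
  Matrix.vecMulVec ψ (star ψ)

/-!
Commuting density matrices are diagonal in a common orthonormal basis, with eigenvalue vectors
`a` and `b`, and there the fidelity reduces to the Bhattacharyya coefficient `∑ k, √(a k * b k)`.
Decomposing along the basis vectors attains this value. Conversely, the diagonal entries of the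
states `σ i` of any decomposition form a column-stochastic matrix carrying `p, q` to `a, b`, and
a stochastic matrix can only increase the Bhattacharyya coefficient (Cauchy–Schwarz in each row).
-/

open Module.End in
theorem LinearMap.IsSymmetric.exists_orthonormalBasis_eigenvectors_of_commute
    {𝕜 E ι : Type*} [RCLike 𝕜] [NormedAddCommGroup E] [InnerProductSpace 𝕜 E]
    [FiniteDimensional 𝕜 E] [Fintype ι] (hι : Module.finrank 𝕜 E = Fintype.card ι)
    {A B : E →ₗ[𝕜] E} (hA : A.IsSymmetric) (hB : B.IsSymmetric) (hAB : Commute A B) :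
    ∃ (v : OrthonormalBasis ι 𝕜 E) (α β : ι → 𝕜),
      ∀ k, A (v k) = α k • v k ∧ B (v k) = β k • v k := by
  classical
  let V : 𝕜 × 𝕜 → Submodule 𝕜 E := fun μ => eigenspace A μ.2 ⊓ eigenspace B μ.1
  have hV : DirectSum.IsInternal V := hA.directSum_isInternal_of_commute hB hAB
  have : Fintype {μ // V μ ≠ ⊥} := hV.submodule_iSupIndep.fintypeNeBotOfFiniteDimensional
  have hV' : DirectSum.IsInternal fun μ : {μ // V μ ≠ ⊥} => V μ :=
    DirectSum.isInternal_ne_bot_iff.mpr hV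
  have hOrth : OrthogonalFamily 𝕜 (fun μ : {μ // V μ ≠ ⊥} => V μ) fun μ => (V μ).subtypeₗᵢ :=
    fun _ _ h => hA.orthogonalFamily_eigenspace_inf_eigenspace hB fun h' => h (Subtype.ext h')
  let w := hV'.subordinateOrthonormalBasis hι hOrth
  let μ := fun k => (hV'.subordinateOrthonormalBasisIndex hι k hOrth).val
  have hw : ∀ k, w k ∈ V (μ k) := fun k => hV'.subordinateOrthonormalBasis_subordinate hι k hOrth
  let e := (Fintype.equivFin ι).symm
  refine ⟨w.reindex e, fun k => (μ (e.symm k)).2, fun k => (μ (e.symm k)).1, fun k => ?_⟩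
  rw [OrthonormalBasis.reindex_apply]
  exact ⟨mem_eigenspace_iff.mp (hw _).1, mem_eigenspace_iff.mp (hw _).2⟩

theorem Matrix.eq_mul_diagonal_mul_star_of_mulVec_transpose {𝕜 d : Type*} [RCLike 𝕜] [Fintype d]
    [DecidableEq d] {A U : Matrix d d 𝕜} (hU : U ∈ unitaryGroup d 𝕜) {α : d → 𝕜}
    (hα : ∀ k, A *ᵥ Uᵀ k = α k • Uᵀ k) : A = U * diagonal α * star U := by
  have hAU : A * U = U * diagonal α := by
    ext i k
    rw [mul_diagonal]
    simpa [mulVec, dotProduct, mul_apply, mul_comm] using congrFun (hα k) i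
  rw [← hAU, mul_assoc, mem_unitaryGroup_iff.mp hU, mul_one]

theorem Matrix.IsHermitian.exists_unitary_diagonal_of_commute {𝕜 d : Type*} [RCLike 𝕜]
    [Fintype d] [DecidableEq d] {A B : Matrix d d 𝕜} (hA : A.IsHermitian) (hB : B.IsHermitian)
    (hAB : Commute A B) :
    ∃ U ∈ unitaryGroup d 𝕜, ∃ α β : d → 𝕜,
      A = U * diagonal α * star U ∧ B = U * diagonal β * star U := by
  obtain ⟨v, α, β, hv⟩ :=
    (isSymmetric_toEuclideanLin_iff.mpr hA).exists_orthonormalBasis_eigenvectors_of_commute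
      finrank_euclideanSpace (isSymmetric_toEuclideanLin_iff.mpr hB)
      (hAB.map (toLpLinAlgEquiv 2))
  let U := (EuclideanSpace.basisFun d 𝕜).toBasis.toMatrix v.toBasis
  have hU : U ∈ unitaryGroup d 𝕜 :=
    (EuclideanSpace.basisFun d 𝕜).toMatrix_orthonormalBasis_mem_unitary v
  refine ⟨U, hU, α, β, eq_mul_diagonal_mul_star_of_mulVec_transpose hU fun k => ?_,
    eq_mul_diagonal_mul_star_of_mulVec_transpose hU fun k => ?_⟩
  · exact congrArg WithLp.ofLp (hv k).1
  · exact congrArg WithLp.ofLp (hv k).2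

section UnitaryConj

variable {R d : Type*} [CommRing R] [StarRing R] [Fintype d] [DecidableEq d]
  {U : Matrix d d R}

namespace Matrix

theorem mul_diagonal_mul_star_mul_mul_diagonal_mul_star (hU : U ∈ unitaryGroup d R)
    (α β : d → R) :
    U * diagonal α * star U * (U * diagonal β * star U) = U * diagonal (α * β) * star U := by
  calc U * diagonal α * star U * (U * diagonal β * star U)
      = U * diagonal α * (star U * U) * diagonal β * star U := by simp only [mul_assoc]
    _ = U * diagonal (α * β) * star U := by
      rw [mem_unitaryGroup_iff'.mp hU, mul_one, mul_assoc U, diagonal_mul_diagonal]; rfl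

theorem star_mul_mul_diagonal_mul_star_mul (hU : U ∈ unitaryGroup d R) (α : d → R) :
    star U * (U * diagonal α * star U) * U = diagonal α := by
  simp only [← mul_assoc, mem_unitaryGroup_iff'.mp hU, one_mul]
  rw [mul_assoc, mem_unitaryGroup_iff'.mp hU, mul_one]

theorem trace_mul_diagonal_mul_star (hU : U ∈ unitaryGroup d R) (α : d → R) :
    (U * diagonal α * star U).trace = ∑ k, α k := by
  rw [trace_mul_cycle, mem_unitaryGroup_iff'.mp hU, one_mul, trace_diagonal]

end Matrix

end UnitaryConj

theorem Matrix.nonneg_of_posSemidef_mul_diagonal_mul_star {𝕜 d : Type*} [RCLike 𝕜] [Fintype d]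
    [DecidableEq d] {U : Matrix d d 𝕜} (hU : U ∈ unitaryGroup d 𝕜) {α : d → 𝕜}
    (h : (U * diagonal α * star U).PosSemidef) (k : d) : 0 ≤ α k := by
  have := h.conjTranspose_mul_mul_same U
  rw [← star_eq_conjTranspose, star_mul_mul_diagonal_mul_star_mul hU, posSemidef_diagonal_iff]
    at this
  exact this k

theorem Matrix.PosSemidef.exists_unitary_diagonal_of_commute {d : Type*} [Fintype d]
    [DecidableEq d] {A B : Matrix d d ℂ} (hA : A.PosSemidef) (hB : B.PosSemidef)
    (hAB : Commute A B) :
    ∃ U ∈ unitaryGroup d ℂ, ∃ a b : d → ℝ, 0 ≤ a ∧ 0 ≤ b ∧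
      A = U * diagonal (fun k => (a k : ℂ)) * star U ∧
      B = U * diagonal (fun k => (b k : ℂ)) * star U := by
  obtain ⟨U, hU, α, β, rfl, rfl⟩ := hA.1.exists_unitary_diagonal_of_commute hB.1 hAB
  have hα := nonneg_of_posSemidef_mul_diagonal_mul_star hU hA
  have hβ := nonneg_of_posSemidef_mul_diagonal_mul_star hU hB
  refine ⟨U, hU, fun k => (α k).re, fun k => (β k).re, fun k => (Complex.nonneg_iff.mp (hα k)).1,
    fun k => (Complex.nonneg_iff.mp (hβ k)).1, ?_, ?_⟩
  · simp_rw [← Complex.eq_re_of_ofReal_le (hα _)]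
  · simp_rw [← Complex.eq_re_of_ofReal_le (hβ _)]

section PsdSqrt

variable {d : Type*} [Fintype d] [DecidableEq d]

open scoped MatrixOrder in
theorem psdSqrt_eq_sqrt {A : Matrix d d ℂ} (hA : A.PosSemidef) : psdSqrt A = CFC.sqrt A := by
  rw [CFC.sqrt_eq_real_sqrt A hA.nonneg, cfcₙ_eq_cfc, hA.1.cfc_eq, IsHermitian.cfc,
    Unitary.conjStarAlgAut_apply, psdSqrt, dif_pos hA]
  rfl

open scoped MatrixOrder in
theorem psdSqrt_eq_of_mul_self {A B : Matrix d d ℂ} (hB : B.PosSemidef) (h : B * B = A) :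
    psdSqrt A = B := by
  have hA : A.PosSemidef := by
    simpa [← h, hB.1.eq] using posSemidef_conjTranspose_mul_self B
  rw [psdSqrt_eq_sqrt hA]
  exact CFC.sqrt_unique h hB.nonneg

end PsdSqrt

noncomputable def bhattacharyya {ι : Type*} [Fintype ι] (p q : ι → ℝ) : ℝ := ∑ i, √(p i * q i)

theorem bhattacharyya_le_mulVec {ι κ : Type*} [Fintype ι] [Fintype κ] {M : Matrix κ ι ℝ}
    (hM : ∀ k i, 0 ≤ M k i) (hMcol : ∀ i, ∑ k, M k i = 1) {p q : ι → ℝ} (hp : 0 ≤ p)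
    (hq : 0 ≤ q) : bhattacharyya p q ≤ bhattacharyya (M *ᵥ p) (M *ᵥ q) := by
  have hsplit : ∀ k i, √(M k i * p i) * √(M k i * q i) = M k i * √(p i * q i) := by
    intro k i
    rw [← Real.sqrt_mul (mul_nonneg (hM k i) (hp i)), mul_mul_mul_comm, Real.sqrt_mul
      (mul_self_nonneg _), Real.sqrt_mul_self (hM k i)]
  calc bhattacharyya p q = ∑ k, ∑ i, √(M k i * p i) * √(M k i * q i) := by
        simp_rw [hsplit, Finset.sum_comm (γ := κ), ← Finset.sum_mul, hMcol, one_mul]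
        rfl
    _ ≤ ∑ k, √((M *ᵥ p) k) * √((M *ᵥ q) k) := Finset.sum_le_sum fun k _ =>
        Real.sum_sqrt_mul_sqrt_le _ (fun i => mul_nonneg (hM k i) (hp i))
          fun i => mul_nonneg (hM k i) (hq i)
    _ = bhattacharyya (M *ᵥ p) (M *ᵥ q) := by
        refine Finset.sum_congr rfl fun k _ => (Real.sqrt_mul ?_ _).symm
        exact Finset.sum_nonneg fun i _ => mul_nonneg (hM k i) (hp i)

section UnitaryConjReal

variable {d : Type*} [Fintype d] [DecidableEq d] {U : Matrix d d ℂ}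

theorem posSemidef_mul_diagonal_mul_star {a : d → ℝ} (ha : 0 ≤ a) :
    (U * diagonal (fun k => (a k : ℂ)) * star U).PosSemidef :=
  (posSemidef_diagonal_iff.mpr fun k => by exact_mod_cast ha k).mul_mul_conjTranspose_same U

theorem psdSqrt_mul_diagonal_mul_star (hU : U ∈ unitaryGroup d ℂ) {a : d → ℝ} (ha : 0 ≤ a) :
    psdSqrt (U * diagonal (fun k => (a k : ℂ)) * star U)
      = U * diagonal (fun k => (√(a k) : ℂ)) * star U := by
  refine psdSqrt_eq_of_mul_self (posSemidef_mul_diagonal_mul_star fun k => Real.sqrt_nonneg _) ?_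
  rw [mul_diagonal_mul_star_mul_mul_diagonal_mul_star hU]
  congr 3 with k
  simp only [Pi.mul_apply, ← Complex.ofReal_mul, Real.mul_self_sqrt (ha k)]

theorem fidelity_mul_diagonal_mul_star (hU : U ∈ unitaryGroup d ℂ) {a b : d → ℝ} (ha : 0 ≤ a)
    (hb : 0 ≤ b) :
    fidelity (U * diagonal (fun k => (a k : ℂ)) * star U)
      (U * diagonal (fun k => (b k : ℂ)) * star U) = bhattacharyya a b := by
  have hprod : psdSqrt (U * diagonal (fun k => (a k : ℂ)) * star U)
      * (U * diagonal (fun k => (b k : ℂ)) * star U)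
      * psdSqrt (U * diagonal (fun k => (a k : ℂ)) * star U)
      = U * diagonal (fun k => ((a k * b k : ℝ) : ℂ)) * star U := by
    rw [psdSqrt_mul_diagonal_mul_star hU ha, mul_diagonal_mul_star_mul_mul_diagonal_mul_star hU,
      mul_diagonal_mul_star_mul_mul_diagonal_mul_star hU]
    congr 3 with k
    simp only [Pi.mul_apply, ← Complex.ofReal_mul]
    rw [mul_right_comm, Real.mul_self_sqrt (ha k)]
  rw [fidelity, hprod, psdSqrt_mul_diagonal_mul_star hU fun k => mul_nonneg (ha k) (hb k),
    trace_mul_diagonal_mul_star hU, ← Complex.ofReal_sum, Complex.ofReal_re, bhattacharyya]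

end UnitaryConjReal

section Decomposition

variable {d : Type*} [Fintype d] [DecidableEq d]

theorem isDensityMatrix_pureState {ψ : d → ℂ} (hψ : star ψ ⬝ᵥ ψ = 1) :
    IsDensityMatrix (pureState ψ) :=
  ⟨posSemidef_vecMulVec_self_star ψ, by rw [pureState, trace_vecMulVec, dotProduct_comm, hψ]⟩

theorem sum_smul_pureState_transpose (U : Matrix d d ℂ) (a : d → ℝ) :
    ∑ k, a k • pureState (Uᵀ k) = U * diagonal (fun k => (a k : ℂ)) * star U := by
  ext i j
  rw [mul_apply, Matrix.sum_apply]
  refine Finset.sum_congr rfl fun k _ => ?_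
  simp only [Matrix.smul_apply, pureState, vecMulVec_apply, mul_diagonal, transpose_apply,
    Pi.star_apply, star_apply, Complex.real_smul]
  ring

theorem bhattacharyya_le_of_sum_smul_eq {ι : Type*} [Fintype ι] {σ : ι → Matrix d d ℂ}
    (hσ : ∀ i, IsDensityMatrix (σ i)) {p q : ι → ℝ} (hp : 0 ≤ p) (hq : 0 ≤ q)
    {U : Matrix d d ℂ} (hU : U ∈ unitaryGroup d ℂ) {a b : d → ℝ}
    (hpa : ∑ i, p i • σ i = U * diagonal (fun k => (a k : ℂ)) * star U)
    (hqb : ∑ i, q i • σ i = U * diagonal (fun k => (b k : ℂ)) * star U) :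
    bhattacharyya p q ≤ bhattacharyya a b := by
  let M : Matrix d ι ℝ := of fun k i => ((star U * σ i * U) k k).re
  have hM : ∀ k i, 0 ≤ M k i := fun k i =>
    (Complex.nonneg_iff.mp ((hσ i).1.conjTranspose_mul_mul_same U).diag_nonneg).1
  have hMcol : ∀ i, ∑ k, M k i = 1 := by
    intro i
    have htrace : (star U * σ i * U).trace = 1 := by
      rw [trace_mul_cycle, mem_unitaryGroup_iff.mp hU, one_mul]
      exact (hσ i).2
    simpa [M, trace, Complex.re_sum] using congrArg Complex.re htrace
  have hMvec : ∀ {r : ι → ℝ} {c : d → ℝ},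
      ∑ i, r i • σ i = U * diagonal (fun k => (c k : ℂ)) * star U → M *ᵥ r = c := by
    intro r c h
    have hconj : star U * (∑ i, r i • σ i) * U = ∑ i, r i • (star U * σ i * U) := by
      simp only [Finset.mul_sum, Finset.sum_mul, mul_smul_comm, smul_mul_assoc]
    funext k
    calc (M *ᵥ r) k = ((∑ i, r i • (star U * σ i * U)) k k).re := by
          simp [M, mulVec, dotProduct, Matrix.sum_apply, Complex.re_sum, mul_comm]
      _ = c k := by
          rw [← hconj, h, star_mul_mul_diagonal_mul_star_mul hU, diagonal_apply_eq,
            Complex.ofReal_re]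
  simpa only [hMvec hpa, hMvec hqb] using bhattacharyya_le_mulVec hM hMcol hp hq

end Decomposition

/-- **Theorem 1(1).** For commuting density matrices, the compatibility
equals the fidelity. -/
theorem compat_eq_fidelity_of_commute {n : ℕ}
    (ρA ρB : Matrix (Fin n) (Fin n) ℂ)
    (hA : IsDensityMatrix ρA) (hB : IsDensityMatrix ρB)
    (hcomm : ρA * ρB = ρB * ρA) :
    compat ρA ρB = fidelity ρA ρB := by
  obtain ⟨U, hU, a, b, ha, hb, rfl, rfl⟩ := hA.1.exists_unitary_diagonal_of_commute hB.1 hcomm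
  have hsum : ∀ {c : Fin n → ℝ},
      IsDensityMatrix (U * diagonal (fun k => (c k : ℂ)) * star U) → ∑ k, c k = 1 := by
    intro c hc
    exact_mod_cast (trace_mul_diagonal_mul_star hU _).symm.trans hc.2
  have hcol : ∀ k, star (Uᵀ k) ⬝ᵥ Uᵀ k = 1 := fun k => by
    simpa [mul_apply, dotProduct] using congrFun (congrFun (mem_unitaryGroup_iff'.mp hU) k) k
  rw [fidelity_mul_diagonal_mul_star hU ha hb, compat]
  refine IsGreatest.csSup_eq ⟨⟨n, fun k => pureState (Uᵀ k), a, b,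
    fun k => isDensityMatrix_pureState (hcol k), ha, hb, hsum hA, hsum hB,
    sum_smul_pureState_transpose U a, sum_smul_pureState_transpose U b, rfl⟩, ?_⟩
  rintro _ ⟨m, σ, p, q, hσ, hp, hq, -, -, hpa, hqb, rfl⟩
  exact bhattacharyya_le_of_sum_smul_eq hσ hp hq hU hpa hqb
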